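/- arXiv:1611.09201 — 11 statements merged into one kernel-verified Lean document; each statement's English description precedes it below -/
import Mathlib

section
/- The number of strings of length w over the alphabet {<, >, =} in which no two consecutive symbols are both unbalanced (i.e., every occurrence of < or > that is not the last symbol is immediately followed by =) equals J_{w+2}, the (w+2)-nd Jacobsthal number. -/
namespace CNCI

def Pred (w : ℕ) (s : Fin w → Fin 3) : Prop :=
  ∀ i : Fin w, ∀ h : (i : ℕ) + 1 < w, s i ≠ 2 → s ⟨(i : ℕ) + 1, h⟩ = 2

lemma cons_mk_succ {w : ℕ} (a : Fin 3) (s : Fin w → Fin 3) (j : ℕ) (h : j + 1 < w + 1) :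
    (Fin.cons a s : Fin (w + 1) → Fin 3) ⟨j + 1, h⟩ = s ⟨j, Nat.lt_of_succ_lt_succ h⟩ := by
  have e : (⟨j + 1, h⟩ : Fin (w + 1)) = Fin.succ ⟨j, Nat.lt_of_succ_lt_succ h⟩ := rfl
  rw [e, Fin.cons_succ]

lemma cons_mk_zero {w : ℕ} (a : Fin 3) (s : Fin w → Fin 3) (h : 0 < w + 1) :
    (Fin.cons a s : Fin (w + 1) → Fin 3) ⟨0, h⟩ = a := by
  have h0 : (⟨0, h⟩ : Fin (w + 1)) = 0 := Fin.ext (by simp)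
  rw [h0, Fin.cons_zero]

lemma pred_cons_iff (w : ℕ) (a : Fin 3) (s : Fin w → Fin 3) :
    Pred (w + 1) (Fin.cons a s) ↔
      Pred w s ∧ (a ≠ 2 → ∀ h0 : 0 < w, s ⟨0, h0⟩ = 2) := by
  constructor
  · intro H
    refine ⟨?_, ?_⟩
    · intro i h hne
      have h2 : ((i : ℕ) + 1) + 1 < w + 1 := by omega
      have := H ⟨(i : ℕ) + 1, by omega⟩ h2 ?_
      · rwa [cons_mk_succ] at this
      · rw [cons_mk_succ]
        simpa using hne
    · intro ha h0
      have h1 : (0 : ℕ) + 1 < w + 1 := by omega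
      have := H ⟨0, by omega⟩ h1 ?_
      · rwa [cons_mk_succ] at this
      · rw [cons_mk_zero]; exact ha
  · rintro ⟨H1, H2⟩ ⟨j, hj⟩ h hne
    simp only [Fin.val_mk] at h hne ⊢
    cases j with
    | zero =>
        rw [cons_mk_succ]
        rw [cons_mk_zero] at hne
        exact H2 hne (by omega)
    | succ k =>
        rw [cons_mk_succ]
        rw [cons_mk_succ] at hne
        exact H1 ⟨k, by omega⟩ (by simpa using h) hne

lemma nat_card_sigma {ι : Type*} [Fintype ι] (f : ι → Type*) [∀ i, Finite (f i)] :
    Nat.card (Σ i, f i) = ∑ i, Nat.card (f i) := by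
  letI : ∀ i, Fintype (f i) := fun i => Fintype.ofFinite _
  simp [Nat.card_eq_fintype_card, Fintype.card_sigma]

/-- count of valid strings -/
noncomputable def C (w : ℕ) : ℕ := Nat.card {s : Fin w → Fin 3 // Pred w s}

/-- count of valid strings starting with `=` (vacuously all if `w = 0`) -/
noncomputable def D (w : ℕ) : ℕ :=
  Nat.card {s : Fin w → Fin 3 // Pred w s ∧ ∀ h0 : 0 < w, s ⟨0, h0⟩ = 2}

def consSubtypeEquiv (w : ℕ) (Q : (Fin (w+1) → Fin 3) → Prop) :
    {p : Fin 3 × (Fin w → Fin 3) // Q (Fin.cons p.1 p.2)} ≃ {s // Q s} :=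
  Equiv.subtypeEquiv (Fin.consEquiv fun _ => Fin 3) (fun _ => Iff.rfl)

lemma C_succ (w : ℕ) : C (w + 1) = C w + 2 * D w := by
  have e1 : {s : Fin (w+1) → Fin 3 // Pred (w+1) s} ≃
      Σ a : Fin 3, {s : Fin w → Fin 3 //
        Pred w s ∧ (a ≠ 2 → ∀ h0 : 0 < w, s ⟨0, h0⟩ = 2)} := by
    refine ((consSubtypeEquiv w _).symm.trans ?_)
    refine (Equiv.subtypeEquivRight ?_).trans
      (Equiv.subtypeProdEquivSigmaSubtype fun (a : Fin 3) s =>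
        Pred w s ∧ (a ≠ 2 → ∀ h0 : 0 < w, s ⟨0, h0⟩ = 2))
    intro p
    exact pred_cons_iff w p.1 p.2
  rw [C, Nat.card_congr e1, nat_card_sigma, Fin.sum_univ_three]
  have hc2 : Nat.card {s : Fin w → Fin 3 //
      Pred w s ∧ ((2 : Fin 3) ≠ 2 → ∀ h0 : 0 < w, s ⟨0, h0⟩ = 2)} = C w := by
    rw [C]
    exact Nat.card_congr (Equiv.subtypeEquivRight fun s => by simp)
  have hc0 : ∀ a : Fin 3, a ≠ 2 → Nat.card {s : Fin w → Fin 3 //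
      Pred w s ∧ (a ≠ 2 → ∀ h0 : 0 < w, s ⟨0, h0⟩ = 2)} = D w := by
    intro a ha
    rw [D]
    exact Nat.card_congr (Equiv.subtypeEquivRight fun s => by simp [ha])
  rw [hc2, hc0 0 (by decide), hc0 1 (by decide)]
  ring

lemma D_succ (w : ℕ) : D (w + 1) = C w := by
  have e1 : {s : Fin (w+1) → Fin 3 //
        Pred (w+1) s ∧ ∀ h0 : 0 < w + 1, s ⟨0, h0⟩ = 2} ≃
      {s : Fin w → Fin 3 // Pred w s} := by
    refine ((consSubtypeEquiv w _).symm.trans ?_)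
    refine Equiv.trans (Equiv.subtypeEquivRight (q := fun p : Fin 3 × (Fin w → Fin 3) =>
      p.1 = 2 ∧ Pred w p.2) ?_) ?_
    · intro p
      rw [pred_cons_iff]
      constructor
      · rintro ⟨⟨h1, h2⟩, h3⟩
        have h4 := h3 (by omega)
        rw [cons_mk_zero] at h4
        exact ⟨h4, h1⟩
      · rintro ⟨h1, h2⟩
        refine ⟨⟨h2, fun hne _ => absurd h1 hne⟩, fun _ => ?_⟩
        rw [cons_mk_zero]; exact h1
    · exact { toFun := fun p => ⟨p.1.2, p.2.2⟩
              invFun := fun s => ⟨(2, s.1), rfl, s.2⟩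
              left_inv := by rintro ⟨⟨a, b⟩, h1, h2⟩; cases h1; rfl
              right_inv := fun s => rfl }
  rw [D, Nat.card_congr e1, C]

lemma C_zero : C 0 = 1 := by
  rw [C]
  have : ∀ s : Fin 0 → Fin 3, Pred 0 s := fun s i => i.elim0
  rw [Nat.card_congr (Equiv.subtypeUnivEquiv this)]
  simp [Nat.card_eq_fintype_card]

lemma D_zero : D 0 = 1 := by
  rw [D]
  have : ∀ s : Fin 0 → Fin 3, Pred 0 s ∧ ∀ h0 : 0 < 0, s ⟨0, h0⟩ = 2 :=
    fun s => ⟨fun i => i.elim0, fun h0 => absurd h0 (by omega)⟩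
  rw [Nat.card_congr (Equiv.subtypeUnivEquiv this)]
  simp [Nat.card_eq_fintype_card]

end CNCI

open CNCI in
/-- Symbols: `0 = <`, `1 = >`, `2 = =`. A symbol is unbalanced iff it is not `2`. -/
theorem count_no_consecutive_imbalances (w : ℕ) (J : ℕ → ℕ)
    (hJ0 : J 0 = 0) (hJ1 : J 1 = 1)
    (hJ : ∀ n, J (n + 2) = J (n + 1) + 2 * J n) :
    Nat.card {s : Fin w → Fin 3 //
      ∀ i : Fin w, ∀ h : (i : ℕ) + 1 < w, s i ≠ 2 → s ⟨(i : ℕ) + 1, h⟩ = 2}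
      = J (w + 2) := by
  have key : ∀ n, C n = J (n + 2) ∧ D n = J (n + 1) := by
    intro n
    induction n with
    | zero =>
        constructor
        · rw [C_zero, hJ 0, hJ0, hJ1]
        · rw [D_zero, hJ1]
    | succ k ih =>
        constructor
        · rw [C_succ, ih.1, ih.2, hJ (k + 1)]
        · rw [D_succ, ih.1]
  exact (key w).1
end

section
/- For all n > 3, 3·L_{n-1} > L_n and 3·H_{n-1} > H_n. -/
theorem three_L_gt_L (L H R : ℕ → ℤ)
    (hL0 : L 0 = 1) (hH0 : H 0 = 1) (hR0 : R 0 = 1)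
    (hL : ∀ n, L (n + 1) = L n + 2 * H n)
    (hH : ∀ n, H (n + 1) = H n + 2 * R n)
    (hR : ∀ n, R (n + 1) = L n) :
    ∀ n : ℕ, 3 < n → 3 * L (n - 1) > L n ∧ 3 * H (n - 1) > H n := by
  have key : ∀ m, H (m+2) > L (m+1) ∧ L (m+2) > H (m+2) ∧
      L (m+2) - H (m+2) < 2 * L (m+1) ∧ 0 < L (m+1) := by
    intro m
    induction m with
    | zero =>
      have l1 : L 1 = 3 := by rw [hL 0, hL0, hH0]; ring
      have h1 : H 1 = 3 := by rw [hH 0, hH0, hR0]; ring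
      have r1 : R 1 = 1 := by rw [hR 0, hL0]
      have l2 : L 2 = 9 := by rw [hL 1, l1, h1]; ring
      have h2 : H 2 = 5 := by rw [hH 1, h1, r1]; ring
      refine ⟨?_, ?_, ?_, ?_⟩ <;> simp [l1, h1, l2, h2] <;> norm_num
    | succ k ih =>
      obtain ⟨h1, h2, h3, h4⟩ := ih
      have e1 := hL (k+2)
      have e2 := hH (k+2)
      have e3 := hR (k+1)
      refine ⟨by linarith, by linarith, by linarith, by linarith⟩
  intro n hn
  obtain ⟨m, rfl⟩ : ∃ m, n = m + 4 := ⟨n - 4, by omega⟩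
  obtain ⟨k1, k2, k3, k4⟩ := key (m+1)
  have e1 := hL (m+3)
  have e2 := hH (m+3)
  have e3 := hR (m+2)
  have : m + 4 - 1 = m + 3 := by omega
  rw [this]
  constructor <;> [skip; skip] <;> simp only [gt_iff_lt] <;> linarith
end

section
/- For all n > 4, L_n > J_{n+3}, where J is the Jacobsthal sequence. -/
theorem L_gt_jacobsthal (L H R J : ℕ → ℤ)
    (hL0 : L 0 = 1) (hH0 : H 0 = 1) (hR0 : R 0 = 1)
    (hL : ∀ n, L (n + 1) = L n + 2 * H n)
    (hH : ∀ n, H (n + 1) = H n + 2 * R n)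
    (hR : ∀ n, R (n + 1) = L n)
    (hJ0 : J 0 = 0) (hJ1 : J 1 = 1)
    (hJ : ∀ n, J (n + 2) = J (n + 1) + 2 * J n) :
    ∀ n : ℕ, 4 < n → L n > J (n + 3) := by
  -- J is nonnegative
  have hJnn : ∀ k, 0 ≤ J k ∧ 0 ≤ J (k + 1) := by
    intro k
    induction k with
    | zero => constructor <;> simp [hJ0, hJ1]
    | succ m ih =>
      refine ⟨ih.2, ?_⟩
      rw [hJ m]
      linarith [ih.1, ih.2]
  -- J is monotone (one step)
  have hJmono : ∀ k, J k ≤ J (k + 1) := by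
    intro k
    cases k with
    | zero => simp [hJ0, hJ1]
    | succ m => rw [hJ m]; linarith [(hJnn m).1]
  -- values up to index 5
  have l1 : L 1 = 3 := by rw [hL 0]; linarith
  have h1 : H 1 = 3 := by rw [hH 0]; linarith
  have r1 : R 1 = 1 := by rw [hR 0]; linarith
  have l2 : L 2 = 9 := by rw [hL 1]; linarith
  have h2 : H 2 = 5 := by rw [hH 1]; linarith
  have r2 : R 2 = 3 := by rw [hR 1]; linarith
  have l3 : L 3 = 19 := by rw [hL 2]; linarith
  have h3 : H 3 = 11 := by rw [hH 2]; linarith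
  have r3 : R 3 = 9 := by rw [hR 2]; linarith
  have l4 : L 4 = 41 := by rw [hL 3]; linarith
  have h4 : H 4 = 29 := by rw [hH 3]; linarith
  have r4 : R 4 = 19 := by rw [hR 3]; linarith
  have l5 : L 5 = 99 := by rw [hL 4]; linarith
  have h5 : H 5 = 67 := by rw [hH 4]; linarith
  have r5 : R 5 = 41 := by rw [hR 4]; linarith
  have j2 : J 2 = 1 := by rw [hJ 0]; linarith
  have j3 : J 3 = 3 := by rw [hJ 1]; linarith
  have j4 : J 4 = 5 := by rw [hJ 2]; linarith
  have j5 : J 5 = 11 := by rw [hJ 3]; linarith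
  have j6 : J 6 = 21 := by rw [hJ 4]; linarith
  have j7 : J 7 = 43 := by rw [hJ 5]; linarith
  have j8 : J 8 = 85 := by rw [hJ 6]; linarith
  -- main induction from 5
  have key : ∀ m : ℕ, L (m + 5) > J (m + 8) ∧ H (m + 5) > J (m + 7) ∧ R (m + 5) > J (m + 6) := by
    intro m
    induction m with
    | zero =>
      refine ⟨?_, ?_, ?_⟩ <;> simp only [Nat.zero_add] <;> omega
    | succ k ih =>
      obtain ⟨ihL, ihH, ihR⟩ := ih
      have e1 : k + 1 + 5 = (k + 5) + 1 := by omega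
      refine ⟨?_, ?_, ?_⟩
      · have e2 : k + 1 + 8 = (k + 7) + 2 := by omega
        rw [e1, hL (k + 5), e2, hJ (k + 7)]
        have e : k + 7 + 1 = k + 8 := by omega
        rw [e]
        linarith
      · have e3 : k + 1 + 7 = (k + 6) + 2 := by omega
        rw [e1, hH (k + 5), e3, hJ (k + 6)]
        have e : k + 6 + 1 = k + 7 := by omega
        rw [e]
        linarith
      · have e4 : k + 1 + 6 = k + 7 := by omega
        rw [e1, hR (k + 5), e4]
        have := hJmono (k + 7)
        have e : k + 7 + 1 = k + 8 := by omega
        rw [e] at this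
        linarith
  intro n hn
  obtain ⟨m, rfl⟩ : ∃ m, n = m + 5 := ⟨n - 5, by omega⟩
  have := (key m).1
  have e : m + 5 + 3 = m + 8 := by ring
  rw [e]
  exact this
end

section
/- Let A, B be vectors in ℤ^k and for a sequence s define A(s,n) as the dot product of A with (s_n, s_{n-1}, …, s_{n-k+1}). If for some m > k we have A(L,m) + B(H,m) > 0, A(L,m-1) + B(H,m-1) > 0, and A(H,m) + B(L,m-1) > 0, then for all n > m we have A(L,n) + B(H,n) > 0 and A(H,n) + B(L,n-1) > 0. -/
theorem dot_product_positivity_propagates (L H R : ℕ → ℤ)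
    (hL0 : L 0 = 1) (hH0 : H 0 = 1) (hR0 : R 0 = 1)
    (hL : ∀ n, L (n + 1) = L n + 2 * H n)
    (hH : ∀ n, H (n + 1) = H n + 2 * R n)
    (hR : ∀ n, R (n + 1) = L n)
    (k : ℕ) (A B : Fin k → ℤ)
    (dot : (Fin k → ℤ) → (ℕ → ℤ) → ℕ → ℤ)
    (hdot : ∀ C s n, dot C s n = ∑ i : Fin k, C i * s (n - (i : ℕ)))
    (m : ℕ) (hm : k < m)
    (h1 : dot A L m + dot B H m > 0)
    (h2 : dot A L (m - 1) + dot B H (m - 1) > 0)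
    (h3 : dot A H m + dot B L (m - 1) > 0) :
    ∀ n : ℕ, m < n → dot A L n + dot B H n > 0 ∧ dot A H n + dot B L (n - 1) > 0 := by
  rcases Nat.eq_zero_or_pos k with hk0 | hk1
  · subst hk0
    simp [hdot] at h1
  have aux : ∀ (C : Fin k → ℤ) (s u v : ℕ → ℤ), (∀ j, s (j + 1) = u j + 2 * v j) →
      ∀ n, k ≤ n + 1 → dot C s (n + 1) = dot C u n + 2 * dot C v n := by
    intro C s u v hs n hn
    simp only [hdot]
    rw [Finset.mul_sum, ← Finset.sum_add_distrib]
    apply Finset.sum_congr rfl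
    intro i _
    have hi : (i : ℕ) < k := i.2
    have h : n + 1 - (i : ℕ) = (n - (i : ℕ)) + 1 := by omega
    rw [h, hs]; ring
  have auxR : ∀ (C : Fin k → ℤ) n, k ≤ n → dot C R n = dot C L (n - 1) := by
    intro C n hn
    simp only [hdot]
    apply Finset.sum_congr rfl
    intro i _
    have hi : (i : ℕ) < k := i.2
    have h : n - (i : ℕ) = (n - 1 - (i : ℕ)) + 1 := by omega
    rw [h, hR]
  -- recurrences for P n = dot A L n + dot B H n, Q n = dot A H n + dot B L (n-1)
  have recP : ∀ n, k ≤ n → dot A L (n + 1) + dot B H (n + 1) =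
      (dot A L n + dot B H n) + 2 * (dot A H n + dot B L (n - 1)) := by
    intro n hn
    rw [aux A L L H hL n (by omega), aux B H H R hH n (by omega), auxR B n hn]
    ring
  have recQ : ∀ n, k ≤ n → dot A H (n + 1) + dot B L n =
      (dot A H n + dot B L (n - 1)) + 2 * (dot A L (n - 1) + dot B H (n - 1)) := by
    intro n hn
    have hn1 : n = (n - 1) + 1 := by omega
    have e1 : dot A H (n + 1) = dot A H n + 2 * dot A R n := aux A H H R hH n (by omega)
    have e2 : dot B L n = dot B L (n - 1) + 2 * dot B H (n - 1) := by
      calc dot B L n = dot B L ((n - 1) + 1) := by rw [← hn1]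
        _ = dot B L (n - 1) + 2 * dot B H (n - 1) := aux B L L H hL (n - 1) (by omega)
    have e3 : dot A R n = dot A L (n - 1) := auxR A n hn
    rw [e1, e2, e3]; ring
  have main : ∀ n, m ≤ n → (dot A L n + dot B H n > 0) ∧
      (dot A L (n - 1) + dot B H (n - 1) > 0) ∧ (dot A H n + dot B L (n - 1) > 0) := by
    intro n hn
    induction n, hn using Nat.le_induction with
    | base => exact ⟨h1, h2, h3⟩
    | succ n hn ih =>
      obtain ⟨ih1, ih2, ih3⟩ := ih
      have hk : k ≤ n := by omega
      have hp := recP n hk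
      have hq := recQ n hk
      have hsub : n + 1 - 1 = n := by omega
      refine ⟨by rw [hp]; linarith, by rw [hsub]; exact ih1, by rw [hsub, hq]; linarith⟩
  intro n hn
  obtain ⟨a, _, c⟩ := main n (by omega)
  exact ⟨a, c⟩
end

section
/- Define HR_0 = LHR_0 = 1 and, for n ≥ 1, HR_n = LHR_{n-1} + 2·R_{n-1} and LHR_n = LHR_{n-1} + 2·HR_{n-1}. Then for all n ≥ 1, HR_n = H_n + L_{n-1} - J_{n+1} and LHR_n = L_n + H_n - J_{n+2}. -/
theorem HR_LHR_formulas (L H R J HR LHR : ℕ → ℤ)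
    (hL0 : L 0 = 1) (hH0 : H 0 = 1) (hR0 : R 0 = 1)
    (hL : ∀ n, L (n + 1) = L n + 2 * H n)
    (hH : ∀ n, H (n + 1) = H n + 2 * R n)
    (hR : ∀ n, R (n + 1) = L n)
    (hJ0 : J 0 = 0) (hJ1 : J 1 = 1)
    (hJ : ∀ n, J (n + 2) = J (n + 1) + 2 * J n)
    (hHR0 : HR 0 = 1) (hLHR0 : LHR 0 = 1)
    (hHR : ∀ n, HR (n + 1) = LHR n + 2 * R n)
    (hLHR : ∀ n, LHR (n + 1) = LHR n + 2 * HR n) :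
    ∀ n : ℕ, 1 ≤ n → HR n = H n + L (n - 1) - J (n + 1) ∧
      LHR n = L n + H n - J (n + 2) := by
  have key : ∀ m : ℕ, HR (m + 1) = H (m + 1) + L m - J (m + 2) ∧
      LHR (m + 1) = L (m + 1) + H (m + 1) - J (m + 3) := by
    intro m
    induction m with
    | zero =>
      constructor
      · have := hHR 0; have := hJ 0; have := hH 0
        simp_all
      · have := hLHR 0; have h2 := hJ 0; have h3 := hJ 1
        have := hL 0; have := hH 0; have := hHR 0
        simp_all
    | succ k ih =>
      obtain ⟨ih1, ih2⟩ := ih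
      have e0 := hR k
      have e1 := hHR (k + 1)
      have e2 := hLHR (k + 1)
      have e3 := hR (k + 1)
      have e4 := hH (k + 1)
      have e5 := hL (k + 1)
      have e6 := hJ (k + 2)
      simp only [show k + 1 + 1 = k + 2 from rfl, show k + 1 + 2 = k + 3 from rfl,
        show k + 1 + 3 = k + 4 from rfl, show k + 2 + 1 = k + 3 from rfl,
        show k + 2 + 2 = k + 4 from rfl] at *
      constructor <;> linarith
  intro n hn
  obtain ⟨m, rfl⟩ := Nat.exists_eq_add_of_le hn
  simp only [Nat.add_comm 1 m]
  simpa using key m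
end

section
/- The sequence LHR defined by LHR_0 = HR_0 = 1, HR_n = LHR_{n-1} + 2·R_{n-1}, LHR_n = LHR_{n-1} + 2·HR_{n-1} (with R_n = L_{n-1} as usual) satisfies the fifth-order recurrence s_n = 3·s_{n-1} - s_{n-2} + s_{n-3} - 2·s_{n-4} - 8·s_{n-5} for all n ≥ 5. -/
theorem LHR_fifth_order_recurrence (L H R HR LHR : ℕ → ℤ)
    (hL0 : L 0 = 1) (hH0 : H 0 = 1) (hR0 : R 0 = 1)
    (hL : ∀ n, L (n + 1) = L n + 2 * H n)
    (hH : ∀ n, H (n + 1) = H n + 2 * R n)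
    (hR : ∀ n, R (n + 1) = L n)
    (hHR0 : HR 0 = 1) (hLHR0 : LHR 0 = 1)
    (hHR : ∀ n, HR (n + 1) = LHR n + 2 * R n)
    (hLHR : ∀ n, LHR (n + 1) = LHR n + 2 * HR n) :
    ∀ n : ℕ, 5 ≤ n → LHR n = 3 * LHR (n - 1) - LHR (n - 2) + LHR (n - 3)
      - 2 * LHR (n - 4) - 8 * LHR (n - 5) := by
  have key : ∀ k, LHR (k + 2) = LHR (k + 1) + 2 * LHR k + 4 * R k := by
    intro k
    have h1 := hLHR (k + 1)
    have h2 := hHR k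
    linarith
  have hLrec : ∀ m, L (m + 2) = 2 * L (m + 1) - L m + 4 * R m := by
    intro m
    have h1 := hL (m + 1)
    have h2 := hH m
    have h3 := hL m
    linarith
  intro n hn
  obtain ⟨m, rfl⟩ : ∃ m, n = m + 5 := ⟨n - 5, by omega⟩
  have e1 : m + 5 - 1 = m + 4 := by omega
  have e2 : m + 5 - 2 = m + 3 := by omega
  have e3 : m + 5 - 3 = m + 2 := by omega
  have e4 : m + 5 - 4 = m + 1 := by omega
  have e5 : m + 5 - 5 = m := by omega
  rw [e1, e2, e3, e4, e5]
  have k0 := key m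
  have k1 := key (m + 1)
  have k2 := key (m + 2)
  have k3 := key (m + 3)
  have r1 := hR m
  have r2 := hR (m + 1)
  have r3 := hR (m + 2)
  have lr := hLrec m
  have h5 : m + 3 + 2 = m + 5 := by omega
  have h4 : m + 2 + 2 = m + 4 := by omega
  have h3' : m + 1 + 2 = m + 3 := by omega
  rw [h5] at k3
  rw [h4] at k2
  rw [h3'] at k1
  linarith
end

section
/- For all n ≥ 5, 2·R_n < HR_n; equivalently, H_n - L_{n-1} > J_{n+1}. -/
theorem two_R_lt_HR (L H R J HR : ℕ → ℤ)
    (hL0 : L 0 = 1) (hH0 : H 0 = 1) (hR0 : R 0 = 1)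
    (hL : ∀ n, L (n + 1) = L n + 2 * H n)
    (hH : ∀ n, H (n + 1) = H n + 2 * R n)
    (hR : ∀ n, R (n + 1) = L n)
    (hJ0 : J 0 = 0) (hJ1 : J 1 = 1)
    (hJ : ∀ n, J (n + 2) = J (n + 1) + 2 * J n)
    (hHR : ∀ n, 1 ≤ n → HR n = H n + L (n - 1) - J (n + 1)) :
    ∀ n : ℕ, 5 ≤ n → 2 * R n < HR n ∧ H n - L (n - 1) > J (n + 1) := by
  have hJnn : ∀ n, 0 ≤ J n ∧ 0 ≤ J (n + 1) := by
    intro n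
    induction n with
    | zero => simp [hJ0, hJ1]
    | succ k ih => exact ⟨ih.2, by rw [hJ k]; linarith [ih.1, ih.2]⟩
  have key : ∀ m, 0 < H (m + 5) - L (m + 4) - J (m + 6)
      ∧ 0 < L (m + 5) - H (m + 5) - J (m + 6)
      ∧ 0 < L (m + 4) - H (m + 4) - J (m + 5) := by
    intro m
    induction m with
    | zero =>
      have l1 : L 1 = 3 := by rw [hL 0]; rw [hL0, hH0]; ring
      have h1 : H 1 = 3 := by rw [hH 0]; rw [hH0, hR0]; ring
      have r1 : R 1 = 1 := by rw [hR 0]; rw [hL0]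
      have l2 : L 2 = 9 := by rw [hL 1, l1, h1]; ring
      have h2 : H 2 = 5 := by rw [hH 1, h1, r1]; ring
      have r2 : R 2 = 3 := by rw [hR 1, l1]
      have l3 : L 3 = 19 := by rw [hL 2, l2, h2]; ring
      have h3 : H 3 = 11 := by rw [hH 2, h2, r2]; ring
      have r3 : R 3 = 9 := by rw [hR 2, l2]
      have l4 : L 4 = 41 := by rw [hL 3, l3, h3]; ring
      have h4 : H 4 = 29 := by rw [hH 3, h3, r3]; ring
      have r4 : R 4 = 19 := by rw [hR 3, l3]
      have l5 : L 5 = 99 := by rw [hL 4, l4, h4]; ring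
      have h5 : H 5 = 67 := by rw [hH 4, h4, r4]; ring
      have j2 : J 2 = 1 := by rw [hJ 0, hJ0, hJ1]; ring
      have j3 : J 3 = 3 := by rw [hJ 1, hJ1, j2]; ring
      have j4 : J 4 = 5 := by rw [hJ 2, j2, j3]; ring
      have j5 : J 5 = 11 := by rw [hJ 3, j3, j4]; ring
      have j6 : J 6 = 21 := by rw [hJ 4, j4, j5]; ring
      norm_num [l4, l5, h4, h5, j5, j6]
    | succ k ih =>
      obtain ⟨d, e, e'⟩ := ih
      have e1 : k + 1 + 5 = k + 6 := by omega
      have e2 : k + 1 + 4 = k + 5 := by omega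
      have e3 : k + 1 + 6 = k + 7 := by omega
      rw [e1, e2, e3]
      have hH5 := hH (k + 5)
      have hR5 : R (k + 5) = L (k + 4) := hR (k + 4)
      have hL5 := hL (k + 5)
      have hL4 := hL (k + 4)
      have hJ5 := hJ (k + 5)
      have hJ4 := hJ (k + 4)
      have hj := (hJnn (k + 4)).1
      refine ⟨by linarith, by linarith, by linarith⟩
  intro n hn
  obtain ⟨m, rfl⟩ : ∃ m, n = m + 5 := ⟨n - 5, by omega⟩
  obtain ⟨d, -, -⟩ := key m
  have hr : R (m + 5) = L (m + 4) := hR (m + 4)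
  have hhr := hHR (m + 5) (by omega)
  have e4 : m + 5 - 1 = m + 4 := by omega
  rw [e4] at hhr ⊢
  constructor
  · rw [hhr, hr]; linarith
  · linarith
end

section
/- For all n ≥ 1, the sequence LHR satisfies LHR_n ≡ 1 (mod 4) when n is even and LHR_n ≡ 3 (mod 4) when n is odd; equivalently, LHR_n mod 4 alternates between 3 and 1 starting with LHR_1 ≡ 3. -/
theorem LHR_mod_four (L H R HR LHR : ℕ → ℤ)
    (hL0 : L 0 = 1) (hH0 : H 0 = 1) (hR0 : R 0 = 1)
    (hL : ∀ n, L (n + 1) = L n + 2 * H n)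
    (hH : ∀ n, H (n + 1) = H n + 2 * R n)
    (hR : ∀ n, R (n + 1) = L n)
    (hHR0 : HR 0 = 1) (hLHR0 : LHR 0 = 1)
    (hHR : ∀ n, HR (n + 1) = LHR n + 2 * R n)
    (hLHR : ∀ n, LHR (n + 1) = LHR n + 2 * HR n) :
    ∀ n : ℕ, 1 ≤ n → (Even n → LHR n % 4 = 1) ∧ (Odd n → LHR n % 4 = 3) := by
  have hlodd : ∀ n, LHR n % 2 = 1 := by
    intro n
    induction n with
    | zero => simp [hLHR0]
    | succ k ih => rw [hLHR k]; omega
  have hhodd : ∀ n, HR n % 2 = 1 := by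
    intro n
    cases n with
    | zero => simp [hHR0]
    | succ k => rw [hHR k]; have := hlodd k; omega
  have key : ∀ n, (Even n → LHR n % 4 = 1) ∧ (Odd n → LHR n % 4 = 3) := by
    intro n
    induction n with
    | zero => simp [hLHR0]
    | succ k ih =>
      have h2 := hhodd k
      have h1 := hlodd k
      rw [Nat.even_add_one, Nat.odd_add_one]
      have := hLHR k
      obtain ⟨he, ho⟩ := ih
      constructor
      · intro hk
        have hok : Odd k := Nat.odd_iff.mpr (by
          rcases Nat.even_or_odd k with h | h
          · exact absurd h hk
          · exact Nat.odd_iff.mp h)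
        have := ho hok
        omega
      · intro hk
        have hek : Even k := Nat.even_iff.mpr (by
          rcases Nat.even_or_odd k with h | h
          · exact Nat.even_iff.mp h
          · exact absurd h hk)
        have := he hek
        omega
  intro n _
  exact key n
end

section
/- Define LX_n = L_n - L_{n-1} - 2·J_n, HX_n = H_n - J_{n+2}, LRX_n = L_{n-1} - J_{n+1}, LHX_n = 2·J_n, LHRX_n = J_{n+1}. Then for all n ≥ 1, LX_n + HX_n + LRX_n + LHX_n + LHRX_n = LHR_n, and all of LX_n, HX_n, LRX_n, LHX_n are even. -/
theorem exclusive_sets_partition (L H R J : ℕ → ℤ)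
    (hL0 : L 0 = 1) (hH0 : H 0 = 1) (hR0 : R 0 = 1)
    (hL : ∀ n, L (n + 1) = L n + 2 * H n)
    (hH : ∀ n, H (n + 1) = H n + 2 * R n)
    (hR : ∀ n, R (n + 1) = L n)
    (hJ0 : J 0 = 0) (hJ1 : J 1 = 1)
    (hJ : ∀ n, J (n + 2) = J (n + 1) + 2 * J n) :
    ∀ n : ℕ, 1 ≤ n →
      (L n - L (n - 1) - 2 * J n) + (H n - J (n + 2)) + (L (n - 1) - J (n + 1))
        + 2 * J n + J (n + 1) = L n + H n - J (n + 2) ∧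
      Even (L n - L (n - 1) - 2 * J n) ∧ Even (H n - J (n + 2)) ∧
      Even (L (n - 1) - J (n + 1)) ∧ Even (2 * J n) := by
  have hLodd : ∀ n, Odd (L n) := by
    intro n
    induction n with
    | zero => rw [hL0]; exact odd_one
    | succ k ih => rw [hL k]; exact ih.add_even (even_two_mul _)
  have hHodd : ∀ n, Odd (H n) := by
    intro n
    induction n with
    | zero => rw [hH0]; exact odd_one
    | succ k ih => rw [hH k]; exact ih.add_even (even_two_mul _)
  have hJodd : ∀ n, Odd (J (n + 1)) := by
    intro n
    induction n with
    | zero => rw [hJ1]; exact odd_one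
    | succ k ih => rw [hJ k]; exact ih.add_even (even_two_mul _)
  rintro (_ | m) hn
  · omega
  · refine ⟨by ring, ?_, ?_, ?_, even_two_mul _⟩
    · have : Even (L (m + 1) - L m) := (hLodd _).sub_odd (hLodd _)
      simpa using this.sub (even_two_mul (J (m + 1)))
    · exact (hHodd _).sub_odd (hJodd _)
    · exact (hLodd _).sub_odd (hJodd _)
end

section
/- For all n ≥ 3, L_n - 2·L_{n-1} ≤ 2·L_{n-2} and H_n - 2·H_{n-1} ≤ 2·H_{n-2}. -/
theorem L_sub_le (L H R : ℕ → ℤ)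
    (hL0 : L 0 = 1) (hH0 : H 0 = 1) (hR0 : R 0 = 1)
    (hL : ∀ n, L (n + 1) = L n + 2 * H n)
    (hH : ∀ n, H (n + 1) = H n + 2 * R n)
    (hR : ∀ n, R (n + 1) = L n) :
    ∀ n : ℕ, 3 ≤ n → L n - 2 * L (n - 1) ≤ 2 * L (n - 2) ∧
      H n - 2 * H (n - 1) ≤ 2 * H (n - 2) := by
  have key : ∀ k, 0 < L k ∧ 0 < R k ∧ 0 < H k ∧ H k ≤ L k ∧ R k ≤ H k ∧
      L k ≤ H k + 2 * R k ∧ H k ≤ 6 * R k := by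
    intro k
    induction k with
    | zero => rw [hL0, hH0, hR0]; norm_num
    | succ m ih =>
      obtain ⟨h1, h2, h3, h4, h5, h6, h7⟩ := ih
      rw [hL, hH, hR]
      refine ⟨by linarith, by linarith, by linarith, by linarith, by linarith,
        by linarith, by linarith⟩
  intro n hn
  obtain ⟨m, rfl⟩ : ∃ m, n = m + 3 := ⟨n - 3, by omega⟩
  obtain ⟨h1, h2, h3, h4, h5, h6, h7⟩ := key m
  have e1 := hL m; have e2 := hL (m + 1); have e3 := hL (m + 2)
  have f1 := hH m; have f2 := hH (m + 1); have f3 := hH (m + 2)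
  have g1 := hR m; have g2 := hR (m + 1)
  have d1 : m + 3 - 1 = m + 2 := rfl
  have d2 : m + 3 - 2 = m + 1 := rfl
  rw [d1, d2]
  constructor <;> linarith
end

section
/- For an even number of weighings 2k with k ≥ 1, the number of outcome strings of length 2k over {<,>,=} with exactly k unbalanced symbols, starting and ending with an unbalanced symbol, and with no two consecutive unbalanced symbols, equals (k-1)·2^k; the number of such strings with exactly k-1 unbalanced symbols, starting and ending with =, and no two consecutive unbalanced symbols, equals k·2^{k-1}; and their difference is (k-2)·2^{k-1}. -/
/-!
Group the positions into consecutive pairs, the blocks `{a + 2t, a + 2t + 1}`. A set of `m`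
pairwise non-consecutive positions inside `m` consecutive blocks meets every block exactly once
(pigeonhole), and once it takes the right element of a block it must take the right element of
every later block. Hence it is one of the `m + 1` sets `staggerSet a m E`, and each such set of
unbalanced positions carries `2 ^ m` choices of signs `<`, `>`.

For the first count the `k` unbalanced symbols fill the `k` blocks of `0, …, 2k - 1`, and the
end conditions say exactly `1 ≤ E < k`. For the second the `k - 1` unbalanced symbols fill the
`k - 1` blocks of `1, …, 2k - 2`, and `E` ranges over `0, …, k - 1`.
-/

open Finset

namespace WeighingPatterns

def NoConsecutive (V : Finset ℕ) : Prop := ∀ u ∈ V, u + 1 ∉ V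

def stagger (a E t : ℕ) : ℕ := a + 2 * t + if E ≤ t then 1 else 0

/-- `{a, a + 2, …, a + 2(E - 1), a + 2E + 1, a + 2E + 3, …, a + 2m - 1}`: from the block
`{a + 2t, a + 2t + 1}`, `t < m`, take the left element if `t < E` and the right one otherwise. -/
def staggerSet (a m E : ℕ) : Finset ℕ := (range m).image (stagger a E)

variable {a m E t : ℕ}

lemma stagger_add_one_lt {t' : ℕ} (h : t < t') : stagger a E t + 1 < stagger a E t' := by
  unfold stagger; split_ifs <;> omega

lemma stagger_strictMono : StrictMono (stagger a E) :=
  fun _ _ h => (Nat.lt_succ_self _).trans (stagger_add_one_lt h)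

lemma mem_staggerSet {u : ℕ} : u ∈ staggerSet a m E ↔ ∃ t < m, stagger a E t = u := by
  simp [staggerSet]

lemma card_staggerSet : #(staggerSet a m E) = m := by
  rw [staggerSet, card_image_of_injective _ stagger_strictMono.injective, card_range]

lemma staggerSet_subset_Ico : staggerSet a m E ⊆ Ico a (a + 2 * m) := by
  intro u hu
  obtain ⟨t, ht, rfl⟩ := mem_staggerSet.1 hu
  rw [mem_Ico]; unfold stagger; split_ifs <;> omega

lemma noConsecutive_staggerSet : NoConsecutive (staggerSet a m E) := by
  intro u hu hu'
  obtain ⟨t, -, rfl⟩ := mem_staggerSet.1 hu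
  obtain ⟨t', -, ht'⟩ := mem_staggerSet.1 hu'
  rcases lt_trichotomy t t' with h | rfl | h
  · exact (stagger_add_one_lt h).ne ht'.symm
  · omega
  · have := stagger_add_one_lt (a := a) (E := E) h
    omega

lemma add_two_mul_mem_staggerSet : a + 2 * t ∈ staggerSet a m E ↔ t < E ∧ t < m := by
  refine ⟨fun h => ?_, fun h => mem_staggerSet.2 ⟨t, h.2, by simp [stagger, h.1]⟩⟩
  obtain ⟨t', ht', h⟩ := mem_staggerSet.1 h
  unfold stagger at h; split_ifs at h <;> omega

lemma add_two_mul_add_one_mem_staggerSet :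
    a + 2 * t + 1 ∈ staggerSet a m E ↔ E ≤ t ∧ t < m := by
  refine ⟨fun h => ?_, fun h => mem_staggerSet.2 ⟨t, h.2, by simp [stagger, h.1]⟩⟩
  obtain ⟨t', ht', h⟩ := mem_staggerSet.1 h
  unfold stagger at h; split_ifs at h <;> omega

lemma left_mem_staggerSet : a ∈ staggerSet a m E ↔ 0 < E ∧ 0 < m := by
  simpa using add_two_mul_mem_staggerSet (a := a) (m := m) (E := E) (t := 0)

lemma add_two_mul_sub_one_mem_staggerSet : a + 2 * m - 1 ∈ staggerSet a m E ↔ E < m := by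
  refine ⟨fun h => ?_, fun h => mem_staggerSet.2 ⟨m - 1, by omega, ?_⟩⟩
  · obtain ⟨t, ht, h⟩ := mem_staggerSet.1 h
    unfold stagger at h; split_ifs at h <;> omega
  · unfold stagger; rw [if_pos (by omega)]; omega

lemma staggerSet_injOn : Set.InjOn (staggerSet a m) (Set.Iic m) := by
  suffices ∀ E E', E < E' → E' ≤ m → staggerSet a m E ≠ staggerSet a m E' by
    intro E hE E' hE' h
    by_contra hne
    rcases Nat.lt_or_gt_of_ne hne with hlt | hlt
    · exact this E E' hlt hE' h
    · exact this E' E hlt hE h.symm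
  intro E E' hlt hE' h
  have hmem : a + 2 * E + 1 ∈ staggerSet a m E :=
    add_two_mul_add_one_mem_staggerSet.2 ⟨le_rfl, by omega⟩
  rw [h, add_two_mul_add_one_mem_staggerSet] at hmem
  omega

/-- Pigeonhole: `u ↦ (u - a) / 2` sends `V` to the `m` block indices, injectively because two
elements of one block are consecutive. -/
lemma NoConsecutive.add_two_mul_mem_or_add_one_mem {V : Finset ℕ} (hV : NoConsecutive V)
    (hsub : V ⊆ Ico a (a + 2 * m)) (hcard : m ≤ #V) (ht : t < m) :
    a + 2 * t ∈ V ∨ a + 2 * t + 1 ∈ V := by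
  have hsurj := surj_on_of_inj_on_of_card_le (s := V) (t := range m) (fun u _ => (u - a) / 2)
    (fun u hu => by have := mem_Ico.1 (hsub hu); rw [mem_range]; omega)
    (fun u v hu hv huv => by
      have := mem_Ico.1 (hsub hu); have := mem_Ico.1 (hsub hv)
      by_contra hne
      rcases (by omega : v = u + 1 ∨ u = v + 1) with rfl | rfl
      exacts [hV u hu hv, hV v hv hu])
    (by rwa [card_range])
  obtain ⟨u, hu, htu⟩ := hsurj t (mem_range.2 ht)
  have := mem_Ico.1 (hsub hu)
  rcases (by omega : u = a + 2 * t ∨ u = a + 2 * t + 1) with rfl | rfl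
  exacts [Or.inl hu, Or.inr hu]

/-- `E` is the first block whose right element lies in `V`: from there on `a + 2t + 1 ∈ V` gives
`a + 2t + 2 ∉ V`, hence `a + 2t + 3 ∈ V`. -/
theorem NoConsecutive.exists_staggerSet_eq {V : Finset ℕ} (hV : NoConsecutive V)
    (hsub : V ⊆ Ico a (a + 2 * m)) (hcard : #V = m) : ∃ E ≤ m, staggerSet a m E = V := by
  have hex : ∃ t, m ≤ t ∨ a + 2 * t + 1 ∈ V := ⟨m, Or.inl le_rfl⟩
  classical
  refine ⟨Nat.find hex, Nat.find_min' hex (Or.inl le_rfl), ?_⟩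
  refine eq_of_subset_of_card_le (fun u hu => ?_) (by rw [hcard, card_staggerSet])
  have hright : ∀ t, Nat.find hex ≤ t → t < m → a + 2 * t + 1 ∈ V := by
    intro t hEt
    induction t, hEt using Nat.le_induction with
    | base => exact fun hEm => (Nat.find_spec hex).resolve_left (by omega)
    | succ t _ ih =>
      intro ht
      refine (hV.add_two_mul_mem_or_add_one_mem hsub hcard.ge ht).resolve_left ?_
      rw [show a + 2 * (t + 1) = a + 2 * t + 1 + 1 by ring]
      exact hV _ (ih (by omega))
  obtain ⟨t, ht, rfl⟩ := mem_staggerSet.1 hu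
  unfold stagger
  split_ifs with hEt
  · exact hright t hEt ht
  · have hleft := not_or.1 (Nat.find_min hex (not_le.1 hEt))
    simpa using (hV.add_two_mul_mem_or_add_one_mem hsub hcard.ge ht).resolve_right hleft.2

def unbalanced {n : ℕ} (s : Fin n → Fin 3) : Finset ℕ :=
  (univ.filter fun i => s i ≠ 2).map Fin.valEmbedding

variable {n : ℕ}

lemma mem_unbalanced {s : Fin n → Fin 3} {u : ℕ} :
    u ∈ unbalanced s ↔ ∃ h : u < n, s ⟨u, h⟩ ≠ 2 := by
  simp [unbalanced, Fin.exists_iff]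

lemma card_unbalanced (s : Fin n → Fin 3) : #(unbalanced s) = #{i | s i ≠ 2} := card_map _

lemma unbalanced_subset_range (s : Fin n → Fin 3) : unbalanced s ⊆ range n :=
  fun _ hu => mem_range.2 (mem_unbalanced.1 hu).1

lemma noConsecutive_unbalanced_iff (s : Fin n → Fin 3) :
    NoConsecutive (unbalanced s) ↔
      ∀ i : Fin n, ∀ h : (i : ℕ) + 1 < n, s i ≠ 2 → s ⟨(i : ℕ) + 1, h⟩ = 2 := by
  simp only [NoConsecutive, mem_unbalanced, ne_eq, not_exists, not_not, forall_exists_index,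
    Fin.forall_iff]
  exact ⟨fun h i hi hi' hs => h i hi hs hi', fun h i hi hs hi' => h i hi hi' hs⟩

lemma card_filter_support_eq {ι : Type*} [Fintype ι] [DecidableEq ι] (U : Finset ι) :
    #{s : ι → Fin 3 | ({i | s i ≠ 2} : Finset ι) = U} = 2 ^ #U := by
  have hsym : ∀ x : Fin 3, x ∈ ({0, 1} : Finset (Fin 3)) ↔ x ≠ 2 := by decide
  have : ({s : ι → Fin 3 | ({i | s i ≠ 2} : Finset ι) = U} : Finset _) =
      Fintype.piFinset fun i => if i ∈ U then ({0, 1} : Finset (Fin 3)) else {2} := by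
    ext s
    simp only [mem_filter, mem_univ, true_and, Fintype.mem_piFinset, Finset.ext_iff]
    refine forall_congr' fun i => ?_
    split_ifs with hi <;> simp [hsym, hi]
  rw [this, Fintype.card_piFinset]
  simp [apply_ite]

lemma card_filter_unbalanced_eq {V : Finset ℕ} (hV : V ⊆ range n) :
    #{s : Fin n → Fin 3 | unbalanced s = V} = 2 ^ #V := by
  have hV' : ∀ u ∈ V, u < n := fun u hu => mem_range.1 (hV hu)
  rw [← card_attachFin V hV', ← card_filter_support_eq]
  refine congrArg card (filter_congr fun s _ => ?_)
  have hmap := map_valEmbedding_attachFin hV'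
  set U := V.attachFin hV'
  rw [← hmap, unbalanced, map_inj]

lemma card_filter_unbalanced_mem {T : Finset (Finset ℕ)} (hT : ∀ V ∈ T, V ⊆ range n) :
    #{s : Fin n → Fin 3 | unbalanced s ∈ T} = ∑ V ∈ T, 2 ^ #V := by
  rw [card_eq_sum_card_fiberwise (s := {s : Fin n → Fin 3 | unbalanced s ∈ T}) (t := T)
    (f := unbalanced) fun s hs => (mem_filter.1 hs).2]
  refine sum_congr rfl fun V hV => ?_
  rw [filter_filter, ← card_filter_unbalanced_eq (hT V hV)]
  exact congrArg card (filter_congr fun s _ => and_iff_right_of_imp fun h => h ▸ hV)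

theorem card_filter_unbalanced_mem_image_staggerSet (h : a + 2 * m ≤ n) {I : Finset ℕ}
    (hI : ∀ E ∈ I, E ≤ m) :
    #{s : Fin n → Fin 3 | unbalanced s ∈ I.image (staggerSet a m)} = #I * 2 ^ m := by
  rw [card_filter_unbalanced_mem,
    sum_image fun E hE E' hE' => staggerSet_injOn (hI E hE) (hI E' hE')]
  · simp [card_staggerSet]
  · simp only [mem_image]
    rintro _ ⟨E, -, rfl⟩ u hu
    have := mem_Ico.1 (staggerSet_subset_Ico hu)
    exact mem_range.2 (by omega)

theorem mem_image_Ico_staggerSet_iff {k : ℕ} {V : Finset ℕ} (hV : V ⊆ range (2 * k)) :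
    V ∈ (Ico 1 k).image (staggerSet 0 k) ↔
      #V = k ∧ 0 ∈ V ∧ 2 * k - 1 ∈ V ∧ NoConsecutive V := by
  simp only [mem_image, mem_Ico]
  constructor
  · rintro ⟨E, ⟨hE, hEk⟩, rfl⟩
    refine ⟨card_staggerSet, left_mem_staggerSet.2 ⟨hE, by omega⟩, ?_,
      noConsecutive_staggerSet⟩
    simpa using (add_two_mul_sub_one_mem_staggerSet (a := 0)).2 hEk
  · rintro ⟨hcard, h0, hlast, hV'⟩
    obtain ⟨E, -, rfl⟩ := hV'.exists_staggerSet_eq (a := 0) (by simpa using hV) hcard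
    exact ⟨E, ⟨(left_mem_staggerSet.1 h0).1,
      (add_two_mul_sub_one_mem_staggerSet (a := 0)).1 (by simpa using hlast)⟩, rfl⟩

theorem mem_image_range_staggerSet_iff {k : ℕ} (hk : 1 ≤ k) {V : Finset ℕ}
    (hV : V ⊆ range (2 * k)) :
    V ∈ (range k).image (staggerSet 1 (k - 1)) ↔
      #V = k - 1 ∧ 0 ∉ V ∧ 2 * k - 1 ∉ V ∧ NoConsecutive V := by
  simp only [mem_image, mem_range]
  constructor
  · rintro ⟨E, -, rfl⟩
    have hsub := @staggerSet_subset_Ico 1 (k - 1) E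
    refine ⟨card_staggerSet, fun h0 => ?_, fun hlast => ?_, noConsecutive_staggerSet⟩
    · have := mem_Ico.1 (hsub h0); omega
    · have := mem_Ico.1 (hsub hlast); omega
  · rintro ⟨hcard, h0, hlast, hV'⟩
    have hsub : V ⊆ Ico 1 (1 + 2 * (k - 1)) := by
      intro u hu
      have := mem_range.1 (hV hu)
      have : u ≠ 0 := fun h => h0 (h ▸ hu)
      have : u ≠ 2 * k - 1 := fun h => hlast (h ▸ hu)
      rw [mem_Ico]; omega
    obtain ⟨E, hE, rfl⟩ := hV'.exists_staggerSet_eq hsub hcard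
    exact ⟨E, by omega, rfl⟩

end WeighingPatterns

open WeighingPatterns

/-- Symbols: `0 = <`, `1 = >`, `2 = =`. A symbol is unbalanced iff it is not `2`. -/
theorem count_even_length_patterns (k : ℕ) (hk : 1 ≤ k) :
    Nat.card {s : Fin (2 * k) → Fin 3 //
        (Finset.univ.filter fun i => s i ≠ 2).card = k ∧
        s ⟨0, by omega⟩ ≠ 2 ∧ s ⟨2 * k - 1, by omega⟩ ≠ 2 ∧
        (∀ i : Fin (2 * k), ∀ h : (i : ℕ) + 1 < 2 * k,
          s i ≠ 2 → s ⟨(i : ℕ) + 1, h⟩ = 2)}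
      = (k - 1) * 2 ^ k ∧
    Nat.card {s : Fin (2 * k) → Fin 3 //
        (Finset.univ.filter fun i => s i ≠ 2).card = k - 1 ∧
        s ⟨0, by omega⟩ = 2 ∧ s ⟨2 * k - 1, by omega⟩ = 2 ∧
        (∀ i : Fin (2 * k), ∀ h : (i : ℕ) + 1 < 2 * k,
          s i ≠ 2 → s ⟨(i : ℕ) + 1, h⟩ = 2)}
      = k * 2 ^ (k - 1) ∧
    ((k : ℤ) - 1) * 2 ^ k - (k : ℤ) * 2 ^ (k - 1) = ((k : ℤ) - 2) * 2 ^ (k - 1) := by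
  refine ⟨?_, ?_, ?_⟩
  · rw [Nat.card_eq_fintype_card, Fintype.card_subtype]
    trans #{s : Fin (2 * k) → Fin 3 | unbalanced s ∈ (Ico 1 k).image (staggerSet 0 k)}
    · refine congrArg card (filter_congr fun s _ => ?_)
      rw [mem_image_Ico_staggerSet_iff (unbalanced_subset_range s), card_unbalanced,
        noConsecutive_unbalanced_iff]
      simp [mem_unbalanced, show 0 < k from hk]
    · rw [card_filter_unbalanced_mem_image_staggerSet (by omega)
        fun E hE => (mem_Ico.1 hE).2.le, Nat.card_Ico]
  · rw [Nat.card_eq_fintype_card, Fintype.card_subtype]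
    trans #{s : Fin (2 * k) → Fin 3 | unbalanced s ∈ (range k).image (staggerSet 1 (k - 1))}
    · refine congrArg card (filter_congr fun s _ => ?_)
      rw [mem_image_range_staggerSet_iff hk (unbalanced_subset_range s), card_unbalanced,
        noConsecutive_unbalanced_iff]
      simp [mem_unbalanced, show 0 < k from hk]
    · rw [card_filter_unbalanced_mem_image_staggerSet (by omega)
        fun E hE => by have := mem_range.1 hE; omega, card_range]
  · obtain ⟨k, rfl⟩ := Nat.exists_eq_add_of_le hk
    simp only [Nat.add_sub_cancel_left]
    push_cast
    ring
end
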